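/- Every nonempty word in W_q (for positive rational q) either is of the form 1^n, or decomposes uniquely as w = p·s where s = 0^{1+⌊i/q⌋}·1^i for some i ≥ 0 and p ∈ W_q. In other words, W_q satisfies the unambiguous decomposition W_q = {1^k : k ≥ 0} ∪ W_q · S_q, where S_q = {0^{1+⌊i/q⌋} 1^i : i ≥ 0}. -/

import Mathlib

/-- `isValid c d w` says every maximal factor of `w` of the form `0^a 1^b`
with `a > 0` satisfies `a * (c/d) > b`, i.e. `c*a > d*b`.
Here `false` plays the role of `0` and `true` of `1`; maximality is expressed
by requiring the prefix to end with `1` (or be empty) and the suffix to start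
with `0` (or be empty). -/
def isValid (c d : ℕ) (w : List Bool) : Prop :=
  ∀ p s : List Bool, ∀ a b : ℕ,
    w = p ++ List.replicate a false ++ List.replicate b true ++ s →
    (p = [] ∨ p.getLast? = some true) →
    (s = [] ∨ s.head? = some false) →
    0 < a → d * b < c * a

/-- number of words of length `n` in `W_{c/d,n}` -/
noncomputable def wcount (c d n : ℕ) : ℕ :=
  Nat.card {w : List Bool // w.length = n ∧ isValid c d w}

/-!
A word containing a `0` ends in a last maximal block `0^m 1^i`, and validity of the word gives
`d i < c m`, i.e. `m ≥ 1 + ⌊i d / c⌋`. Splitting off `0^(1 + ⌊i d / c⌋) 1^i` therefore leaves a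
prefix ending in the surplus zeros, which is still valid; the split is unique because `i` is the
number of trailing `1`s of the word. Conversely, appending such a block to a valid word creates
only one new maximal block, possibly merged with trailing zeros of the word, which only lengthens
its `0`-part.
-/

open List

lemma takeWhile_reverse_append_replicate_length (l : List Bool) {m : ℕ} (hm : 0 < m) (i : ℕ) :
    ((l ++ replicate m false ++ replicate i true).reverse.takeWhile id).length = i := by
  obtain ⟨k, rfl⟩ := Nat.exists_eq_succ_of_ne_zero hm.ne'
  simp [replicate_succ']

lemma append_replicate_false_append_replicate_true_inj {l l' : List Bool} {m m' i j : ℕ}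
    (hm : 0 < m) (hm' : 0 < m')
    (h : l ++ replicate m false ++ replicate i true = l' ++ replicate m' false ++ replicate j true) :
    i = j ∧ l ++ replicate m false = l' ++ replicate m' false := by
  have hij : i = j := by
    simpa only [takeWhile_reverse_append_replicate_length _ hm,
      takeWhile_reverse_append_replicate_length _ hm'] using
      congrArg (fun w => (w.reverse.takeWhile id).length) h
  exact ⟨hij, (append_inj' h (by simp [hij])).1⟩

lemma le_of_append_replicate_false_eq {p u : List Bool} {a m : ℕ}
    (hp : p = [] ∨ p.getLast? = some true)
    (h : p ++ replicate a false = u ++ replicate m false) : m ≤ a := by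
  by_contra! ham
  rw [← Nat.sub_add_cancel ham.le, replicate_add, ← append_assoc] at h
  have hma : m - a ≠ 0 := by omega
  have hpu : p = u ++ replicate (m - a) false := append_cancel_right h
  rcases hp with rfl | hp <;> simp_all [getLast?_append, getLast?_replicate]

lemma append_ne_replicate_false_append_replicate_true {t s : List Bool}
    (ht : t.getLast? = some true) (hs : s.head? = some false) (m i : ℕ) :
    t ++ s ≠ replicate m false ++ replicate i true := by
  -- `0^m 1^i` is sorted, while in `t ++ s` a `true` comes before a `false`
  intro h
  have hsorted : (t ++ s).Pairwise (· ≤ ·) := by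
    rw [h]
    simp only [pairwise_append, pairwise_replicate, mem_replicate]
    simp
  exact absurd ((pairwise_append.mp hsorted).2.2 _ (mem_of_getLast? ht) _ (mem_of_mem_head? hs))
    (by decide)

lemma eq_replicate_true_or_exists_last_block (w : List Bool) :
    (∃ k, w = replicate k true) ∨
      ∃ u m i, 0 < m ∧ (u = [] ∨ u.getLast? = some true) ∧
        w = u ++ replicate m false ++ replicate i true := by
  induction w using List.reverseRecOn with
  | nil => exact Or.inl ⟨0, rfl⟩
  | append_singleton w x ih =>
    rcases ih with ⟨k, rfl⟩ | ⟨u, m, i, hm, hu, rfl⟩ <;> cases x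
    · exact Or.inr ⟨replicate k true, 1, 0, one_pos, by cases k <;> simp [getLast?_replicate], by simp⟩
    · exact Or.inl ⟨k + 1, by simp [replicate_succ']⟩
    · cases i with
      | zero => exact Or.inr ⟨u, m + 1, 0, by omega, hu, by simp [replicate_succ']⟩
      | succ i => exact Or.inr ⟨u ++ replicate m false ++ replicate (i + 1) true, 1, 0, one_pos,
          Or.inr (by simp [getLast?_append, getLast?_replicate]), by simp⟩
    · exact Or.inr ⟨u, m, i + 1, hm, hu, by simp [replicate_succ']⟩

lemma isValid_replicate_true (c d k : ℕ) : isValid c d (replicate k true) := by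
  intro p s a b E _ _ ha
  have : false ∈ replicate k true := by rw [E]; simp [ha.ne']
  simp at this

namespace isValid

variable {c d : ℕ} {v : List Bool}

lemma of_append_replicate_true {i : ℕ} (h : isValid c d (v ++ replicate i true)) :
    isValid c d v := by
  intro p s a b E hp hs ha
  rcases hs with rfl | hs
  · have := h p [] a (b + i) (by rw [E, replicate_add]; simp) hp (Or.inl rfl) ha
    exact lt_of_le_of_lt (Nat.mul_le_mul_left d (Nat.le_add_right b i)) this
  · exact h p (s ++ replicate i true) a b (by simp [E]) hp (Or.inr (by simp [head?_append, hs])) ha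

lemma of_append_replicate_false {k : ℕ} (h : isValid c d (v ++ replicate k false)) :
    isValid c d v := by
  intro p s a b E hp hs ha
  refine h p (s ++ replicate k false) a b (by simp [E]) hp ?_ ha
  rcases hs with rfl | hs
  · cases k <;> simp [replicate_succ]
  · exact Or.inr (by simp [head?_append, hs])

lemma append_block {u : List Bool} {m i : ℕ} (hu : isValid c d u) (hm : 0 < m)
    (hmi : d * i < c * m) : isValid c d (u ++ replicate m false ++ replicate i true) := by
  intro p s a b E hp hs ha
  obtain rfl | hb := Nat.eq_zero_or_pos b
  · have hc : 0 < c := Nat.pos_of_ne_zero (by rintro rfl; simp at hmi)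
    simpa using Nat.mul_pos hc ha
  rcases hs with rfl | hs
  · obtain ⟨rfl, h⟩ := append_replicate_false_append_replicate_true_inj ha hm (by simpa using E.symm)
    exact hmi.trans_le (Nat.mul_le_mul_left c (le_of_append_replicate_false_eq hp h))
  rw [append_assoc u] at E
  rcases append_eq_append_iff.mp E.symm with ⟨t, hu', hs'⟩ | ⟨t, hblock, hts⟩
  · refine hu p t a b hu' hp ?_ ha
    cases t with
    | nil => exact Or.inl rfl
    | cons x t => exact Or.inr (by simpa [hs'] using hs)
  · obtain rfl | ht := eq_or_ne t []
    · exact hu p [] a b (by simpa using hblock.symm) hp (Or.inl rfl) ha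
    have ht : t.getLast? = some true := by
      have := congrArg getLast? hblock
      rw [getLast?_append_of_ne_nil _ ht] at this
      simpa [getLast?_append, getLast?_replicate, hb.ne'] using this.symm
    exact absurd hts.symm (append_ne_replicate_false_append_replicate_true ht hs m i)

end isValid

lemma one_add_mul_div_le_iff {c : ℕ} (hc : 0 < c) (d i m : ℕ) :
    1 + i * d / c ≤ m ↔ d * i < c * m := by
  rw [add_comm, Nat.add_one_le_iff, Nat.div_lt_iff_lt_mul hc, mul_comm d, mul_comm c]

theorem stmt7_general (c d : ℕ) (hc : 0 < c) :
    (∀ w : List Bool, isValid c d w →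
      (∃ k : ℕ, w = List.replicate k true) ∨
      (∃! ps : List Bool × ℕ, isValid c d ps.1 ∧
        w = ps.1 ++ List.replicate (1 + ps.2 * d / c) false ++ List.replicate ps.2 true)) ∧
    (∀ p : List Bool, ∀ i : ℕ, isValid c d p →
      isValid c d (p ++ List.replicate (1 + i * d / c) false ++ List.replicate i true)) ∧
    (∀ k : ℕ, isValid c d (List.replicate k true)) := by
  refine ⟨fun w hw => ?_, fun p i hp => hp.append_block (by positivity)
    ((one_add_mul_div_le_iff hc d i _).mp le_rfl), isValid_replicate_true c d⟩
  obtain hk | ⟨u, m, i, hm, hu, rfl⟩ := eq_replicate_true_or_exists_last_block w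
  · exact Or.inl hk
  refine Or.inr ?_
  have hmi : d * i < c * m := hw u [] m i (by simp) hu (Or.inl rfl) hm
  obtain ⟨k, rfl⟩ := Nat.exists_eq_add_of_le' ((one_add_mul_div_le_iff hc d i m).mpr hmi)
  have hw' : u ++ replicate (k + (1 + i * d / c)) false ++ replicate i true =
      u ++ replicate k false ++ replicate (1 + i * d / c) false ++ replicate i true := by
    rw [replicate_add]
    simp only [append_assoc]
  refine ⟨(u ++ replicate k false, i), ⟨?_, hw'⟩, ?_⟩
  · exact (hw' ▸ hw).of_append_replicate_true.of_append_replicate_false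
  · rintro ⟨p, j⟩ ⟨-, h⟩
    obtain ⟨rfl, h'⟩ := append_replicate_false_append_replicate_true_inj (by positivity) (by positivity)
      (hw'.symm.trans h)
    simp [append_cancel_right h']

theorem stmt7 (c d : ℕ) (hc : 0 < c) (hd : 0 < d) (hcd : Nat.Coprime c d) :
    (∀ w : List Bool, isValid c d w →
      (∃ k : ℕ, w = List.replicate k true) ∨
      (∃! ps : List Bool × ℕ, isValid c d ps.1 ∧
        w = ps.1 ++ List.replicate (1 + ps.2 * d / c) false ++ List.replicate ps.2 true)) ∧
    (∀ p : List Bool, ∀ i : ℕ, isValid c d p →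
      isValid c d (p ++ List.replicate (1 + i * d / c) false ++ List.replicate i true)) ∧
    (∀ k : ℕ, isValid c d (List.replicate k true)) :=
  stmt7_general c d hc
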